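/- Fix n ≥ 1, r > 0, and nonnegative integers α₁,…,α_n. Let Q(x) = |x₁|^{α₁} |x₂|^{α₂} ⋯ |x_n|^{α_n} and set β_i = (α_i + 1)/2 for each i. Then the Lebesgue integral of Q over the closed Euclidean ball B_n(0;r) = {x ∈ ℝⁿ : ‖x‖ ≤ r} equals (2 r^{α₁+⋯+α_n+n} / (α₁+⋯+α_n+n)) · (Γ(β₁)Γ(β₂)⋯Γ(β_n)) / Γ(β₁+β₂+⋯+β_n), where Γ is the Gamma function. -/

import Mathlib

/-!
In polar coordinates, for `f` positively homogeneous of degree `d` on an `n`-dimensional space,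
both `∫_{B(0,R)} f` and `∫ f(x) e^{-‖x‖²} dx` factor as the spherical integral of `f` times a
radial integral, namely `R^{n+d}/(n+d)` and `Γ((n+d)/2)/2`. Eliminating the unknown spherical
integral expresses the ball integral through the Gaussian one, and for the monomial
`∏ |xᵢ|^{αᵢ}` the Gaussian integral splits over the coordinates into the one-dimensional
integrals `∫ |u|^a e^{-u²} du = Γ((a+1)/2)`.
-/

open MeasureTheory Measure Set Metric Real Module
open scoped ENNReal

theorem integral_Ioi_pow_mul_exp_neg_sq (k : ℕ) :
    ∫ t in Ioi (0 : ℝ), t ^ k * exp (-t ^ 2) = Gamma ((k + 1) / 2) / 2 := by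
  have h := integral_rpow_mul_exp_neg_rpow (p := 2) (q := k) two_pos
    (neg_one_lt_zero.trans_le k.cast_nonneg)
  simp only [rpow_natCast, rpow_two] at h
  rw [h, one_div_mul_eq_div]

theorem integral_abs_pow_mul_exp_neg_sq (k : ℕ) :
    ∫ u : ℝ, |u| ^ k * exp (-u ^ 2) = Gamma ((k + 1) / 2) := by
  have h := integral_comp_abs (f := fun t : ℝ => t ^ k * exp (-t ^ 2))
  simp only [sq_abs] at h
  rw [h, integral_Ioi_pow_mul_exp_neg_sq, mul_div_cancel₀ _ two_ne_zero]

section Polar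

variable {E : Type*} [NormedAddCommGroup E] [NormedSpace ℝ E] [MeasurableSpace E] [BorelSpace E]
  [FiniteDimensional ℝ E] [Nontrivial E] (μ : Measure E) [μ.IsAddHaarMeasure]

theorem lintegral_eq_lintegral_toSphere_lintegral_Ioi {f : E → ℝ≥0∞} (hf : Measurable f) :
    ∫⁻ x, f x ∂μ = ∫⁻ y, (∫⁻ t in Ioi (0 : ℝ),
      ENNReal.ofReal (t ^ (finrank ℝ E - 1)) * f (t • (y : E))) ∂μ.toSphere := by
  have hprod : Measurable fun p : sphere (0 : E) 1 × Ioi (0 : ℝ) => f ((p.2 : ℝ) • (p.1 : E)) :=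
    hf.comp (by fun_prop)
  calc ∫⁻ x, f x ∂μ = ∫⁻ x : ({0}ᶜ : Set E), f x ∂(μ.comap (↑)) := by
        rw [lintegral_subtype_comap (measurableSet_singleton _).compl, restrict_compl_singleton]
    _ = ∫⁻ p, f ((p.2 : ℝ) • (p.1 : E)) ∂(μ.toSphere.prod (volumeIoiPow (finrank ℝ E - 1))) := by
        rw [← (measurePreserving_homeomorphUnitSphereProd μ).lintegral_comp_emb
          (homeomorphUnitSphereProd E).measurableEmbedding]
        refine lintegral_congr fun x => ?_
        simp [homeomorphUnitSphereProd, smul_inv_smul₀ (norm_ne_zero_iff.2 x.2)]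
    _ = _ := by
        rw [lintegral_prod _ hprod.aemeasurable]
        refine lintegral_congr fun y => ?_
        rw [volumeIoiPow, lintegral_withDensity_eq_lintegral_mul_non_measurable _ (by fun_prop)
          (ae_of_all _ fun _ => ENNReal.ofReal_lt_top), ← lintegral_subtype_comap measurableSet_Ioi]
        rfl

variable {μ} {f : E → ℝ≥0∞} {d : ℕ}

theorem lintegral_mul_comp_norm_of_homogeneous (hf : Measurable f)
    (hf_hom : ∀ t : ℝ, 0 < t → ∀ x, f (t • x) = ENNReal.ofReal (t ^ d) * f x)
    {g : ℝ → ℝ≥0∞} (hg : Measurable g) :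
    ∫⁻ x, f x * g ‖x‖ ∂μ = (∫⁻ y, f y ∂μ.toSphere) *
      ∫⁻ t in Ioi (0 : ℝ), ENNReal.ofReal (t ^ (finrank ℝ E - 1 + d)) * g t := by
  rw [lintegral_eq_lintegral_toSphere_lintegral_Ioi μ (f := fun x => f x * g ‖x‖) (by fun_prop),
    ← lintegral_mul_const _ (f := fun y : sphere (0 : E) 1 => f y) (by fun_prop)]
  refine lintegral_congr fun y => ?_
  rw [← lintegral_const_mul _ (by fun_prop)]
  refine setLIntegral_congr_fun measurableSet_Ioi fun t (ht : 0 < t) => ?_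
  rw [hf_hom t ht, norm_smul_of_nonneg ht.le, norm_eq_of_mem_sphere y, mul_one, pow_add,
    ENNReal.ofReal_mul (by positivity)]
  ring

theorem setLIntegral_closedBall_of_homogeneous (hf : Measurable f)
    (hf_hom : ∀ t : ℝ, 0 < t → ∀ x, f (t • x) = ENNReal.ofReal (t ^ d) * f x)
    {R : ℝ} (hR : 0 ≤ R) :
    ∫⁻ x in closedBall 0 R, f x ∂μ = (∫⁻ y, f y ∂μ.toSphere) *
      ENNReal.ofReal (R ^ (finrank ℝ E + d) / (finrank ℝ E + d : ℕ)) := by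
  set k := finrank ℝ E - 1 + d
  have hk : finrank ℝ E + d = k + 1 := by have := finrank_pos (R := ℝ) (M := E); omega
  have hball : ∀ x : E, (closedBall 0 R).indicator f x = f x * (Iic R).indicator 1 ‖x‖ := by
    intro x
    by_cases hx : ‖x‖ ≤ R <;> simp [hx]
  have hradial : ∫⁻ t in Ioi (0 : ℝ), ENNReal.ofReal (t ^ k) * (Iic R).indicator 1 t
      = ENNReal.ofReal (R ^ (k + 1) / (k + 1)) := by
    simp_rw [← indicator_mul_right _ (fun t => ENNReal.ofReal (t ^ k)), Pi.one_apply, mul_one]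
    rw [lintegral_indicator measurableSet_Iic, restrict_restrict measurableSet_Iic, Iic_inter_Ioi,
      ← ofReal_integral_eq_lintegral_ofReal (continuous_pow k).integrableOn_Ioc
        (ae_restrict_of_forall_mem measurableSet_Ioc fun t ht => pow_nonneg ht.1.le k),
      ← intervalIntegral.integral_of_le hR, integral_pow]
    simp
  rw [← lintegral_indicator measurableSet_closedBall, lintegral_congr hball,
    lintegral_mul_comp_norm_of_homogeneous hf hf_hom (measurable_one.indicator measurableSet_Iic),
    hradial, hk]
  push_cast
  rfl

theorem lintegral_mul_exp_neg_norm_sq_of_homogeneous (hf : Measurable f)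
    (hf_hom : ∀ t : ℝ, 0 < t → ∀ x, f (t • x) = ENNReal.ofReal (t ^ d) * f x) :
    ∫⁻ x, f x * ENNReal.ofReal (exp (-‖x‖ ^ 2)) ∂μ = (∫⁻ y, f y ∂μ.toSphere) *
      ENNReal.ofReal (Gamma ((finrank ℝ E + d : ℕ) / 2) / 2) := by
  set k := finrank ℝ E - 1 + d
  have hk : finrank ℝ E + d = k + 1 := by have := finrank_pos (R := ℝ) (M := E); omega
  have hradial : ∫⁻ t in Ioi (0 : ℝ), ENNReal.ofReal (t ^ k) * ENNReal.ofReal (exp (-t ^ 2))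
      = ENNReal.ofReal (Gamma ((k + 1) / 2) / 2) := by
    -- integrability comes for free: the real integral is already known to be positive
    have hpos : 0 < Gamma ((k + 1) / 2) / 2 := by positivity
    rw [← integral_Ioi_pow_mul_exp_neg_sq] at hpos ⊢
    rw [ofReal_integral_eq_lintegral_ofReal (.of_integral_ne_zero hpos.ne')
      (ae_restrict_of_forall_mem measurableSet_Ioi fun t (ht : 0 < t) => by positivity)]
    refine setLIntegral_congr_fun measurableSet_Ioi fun t (ht : 0 < t) => ?_
    rw [ENNReal.ofReal_mul (by positivity)]
  rw [lintegral_mul_comp_norm_of_homogeneous hf hf_hom (g := fun t => ENNReal.ofReal (exp (-t ^ 2)))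
    (by fun_prop), hradial, hk]
  push_cast
  rfl

theorem setLIntegral_closedBall_eq_mul_lintegral_mul_exp_neg_norm_sq (hf : Measurable f)
    (hf_hom : ∀ t : ℝ, 0 < t → ∀ x, f (t • x) = ENNReal.ofReal (t ^ d) * f x)
    {R : ℝ} (hR : 0 ≤ R) :
    ∫⁻ x in closedBall 0 R, f x ∂μ =
      ENNReal.ofReal (2 * R ^ (finrank ℝ E + d) /
        ((finrank ℝ E + d : ℕ) * Gamma ((finrank ℝ E + d : ℕ) / 2))) *
      ∫⁻ x, f x * ENNReal.ofReal (exp (-‖x‖ ^ 2)) ∂μ := by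
  have hdim : 0 < finrank ℝ E := finrank_pos
  have hΓ : 0 < Gamma ((finrank ℝ E + d : ℕ) / 2) := Gamma_pos_of_pos (by positivity)
  rw [setLIntegral_closedBall_of_homogeneous hf hf_hom hR,
    lintegral_mul_exp_neg_norm_sq_of_homogeneous hf hf_hom, mul_left_comm,
    ← ENNReal.ofReal_mul (by positivity)]
  congr 2
  field_simp

theorem setIntegral_closedBall_eq_mul_integral_mul_exp_neg_norm_sq {f : E → ℝ} (hf : Measurable f)
    (hf_nonneg : 0 ≤ f) (hf_hom : ∀ t : ℝ, 0 < t → ∀ x, f (t • x) = t ^ d * f x)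
    {R : ℝ} (hR : 0 ≤ R) :
    ∫ x in closedBall 0 R, f x ∂μ =
      2 * R ^ (finrank ℝ E + d) / ((finrank ℝ E + d : ℕ) * Gamma ((finrank ℝ E + d : ℕ) / 2)) *
      ∫ x, f x * exp (-‖x‖ ^ 2) ∂μ := by
  have hdim : 0 < finrank ℝ E := finrank_pos
  have hΓ : 0 < Gamma ((finrank ℝ E + d : ℕ) / 2) := Gamma_pos_of_pos (by positivity)
  rw [integral_eq_lintegral_of_nonneg_ae (ae_of_all _ hf_nonneg) hf.aestronglyMeasurable,
    integral_eq_lintegral_of_nonneg_ae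
      (ae_of_all _ fun x => mul_nonneg (hf_nonneg x) (exp_pos _).le) (by fun_prop),
    setLIntegral_closedBall_eq_mul_lintegral_mul_exp_neg_norm_sq hf.ennreal_ofReal
      (fun t ht x => by rw [hf_hom t ht, ENNReal.ofReal_mul (by positivity)]) hR,
    ENNReal.toReal_mul, ENNReal.toReal_ofReal (by positivity)]
  simp_rw [ENNReal.ofReal_mul (hf_nonneg _)]

end Polar

theorem EuclideanSpace.prod_abs_smul_pow {ι : Type*} [Fintype ι] (α : ι → ℕ) (t : ℝ)
    (x : EuclideanSpace ℝ ι) :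
    ∏ i, |(t • x) i| ^ α i = |t| ^ (∑ i, α i) * ∏ i, |x i| ^ α i := by
  simp [abs_mul, mul_pow, Finset.prod_mul_distrib, Finset.prod_pow_eq_pow_sum]

theorem EuclideanSpace.integral_prod_abs_pow_mul_exp_neg_norm_sq {ι : Type*} [Fintype ι]
    (α : ι → ℕ) :
    ∫ x : EuclideanSpace ℝ ι, (∏ i, |x i| ^ α i) * exp (-‖x‖ ^ 2) =
      ∏ i, Gamma ((α i + 1) / 2) := by
  have hsplit : ∀ x : EuclideanSpace ℝ ι,
      (∏ i, |x i| ^ α i) * exp (-‖x‖ ^ 2) = ∏ i, |x i| ^ α i * exp (-x i ^ 2) := by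
    intro x
    rw [EuclideanSpace.real_norm_sq_eq, ← Finset.sum_neg_distrib, exp_sum, Finset.prod_mul_distrib]
  simp_rw [hsplit]
  rw [← (PiLp.volume_preserving_toLp ι).integral_comp
      (MeasurableEquiv.toLp 2 _).measurableEmbedding,
    integral_fintype_prod_volume_eq_prod (fun i u => |u| ^ α i * exp (-u ^ 2))]
  simp_rw [integral_abs_pow_mul_exp_neg_sq]

theorem integral_abs_monomial_ball
    (n : ℕ) (hn : 1 ≤ n) (r : ℝ) (hr : 0 < r) (α : Fin n → ℕ) :
    (∫ x in Metric.closedBall (0 : EuclideanSpace ℝ (Fin n)) r, ∏ i, |x i| ^ α i)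
      = (2 * r ^ ((∑ i, α i) + n) / (((∑ i, α i : ℕ) : ℝ) + n)) *
          ((∏ i, Real.Gamma (((α i : ℝ) + 1) / 2)) /
            Real.Gamma (∑ i, ((α i : ℝ) + 1) / 2)) := by
  have : Nonempty (Fin n) := ⟨⟨0, hn⟩⟩
  have hβ : ∑ i, ((α i : ℝ) + 1) / 2 = ((n + ∑ i, α i : ℕ) : ℝ) / 2 := by
    rw [← Finset.sum_div, Finset.sum_add_distrib]
    simp [add_comm]
  rw [setIntegral_closedBall_eq_mul_integral_mul_exp_neg_norm_sq (by fun_prop)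
      (fun x => by positivity)
      (fun t ht x => by rw [EuclideanSpace.prod_abs_smul_pow, abs_of_pos ht]) hr.le,
    EuclideanSpace.integral_prod_abs_pow_mul_exp_neg_norm_sq, finrank_euclideanSpace_fin, hβ,
    add_comm n]
  push_cast
  field_simp
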